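/- arXiv:1902.04203 — 2 statements merged into one kernel-verified Lean document; each statement's English description precedes it below -/
import Mathlib

section
/- The number of primitive Dirichlet characters modulo q equals Σ_{d·r = q} μ(d)·φ(r), where the sum is over factorizations q = d·r with d, r positive integers. -/
/-!
Every Dirichlet character mod `n` is induced by a unique primitive character mod its conductor,
which divides `n`. Hence the numbers of primitive characters mod the divisors `d ∣ n` add up to
the number `φ(n)` of all characters mod `n`, and Möbius inversion gives the formula.
-/

open ArithmeticFunction

namespace DirichletCharacter

noncomputable def isPrimitiveEquivConductorEq {R : Type*} [CommMonoidWithZero R] {n d : ℕ}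
    [NeZero n] (hd : d ∣ n) :
    {ψ : DirichletCharacter R d // ψ.IsPrimitive} ≃
      {χ : DirichletCharacter R n // χ.conductor = d} :=
  Equiv.ofBijective (fun ψ ↦ ⟨changeLevel hd ψ.1, (conductor_changeLevel ψ.1 hd).trans ψ.2⟩) <| by
    refine ⟨fun ψ₁ ψ₂ h ↦ Subtype.ext <| changeLevel_injective hd (congrArg Subtype.val h), ?_⟩
    rintro ⟨χ, rfl⟩
    exact ⟨⟨χ.primitiveCharacter, χ.primitiveCharacter_isPrimitive⟩,
      Subtype.ext χ.changeLevel_primitiveCharacter⟩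

theorem sum_card_isPrimitive_eq_card {R : Type*} [CommRing R] [IsDomain R] (n : ℕ) [NeZero n] :
    ∑ d ∈ n.divisors, Nat.card {ψ : DirichletCharacter R d // ψ.IsPrimitive} =
      Nat.card (DirichletCharacter R n) := by
  classical
  rw [Nat.card_eq_fintype_card, ← Finset.card_univ,
    Finset.card_eq_sum_card_fiberwise fun χ _ ↦ Nat.mem_divisors.mpr
      ⟨conductor_dvd_level χ, NeZero.ne n⟩]
  refine Finset.sum_congr rfl fun d hd ↦ ?_
  rw [Nat.card_congr (isPrimitiveEquivConductorEq (Nat.dvd_of_mem_divisors hd)),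
    Nat.card_eq_fintype_card, Fintype.card_subtype, Finset.filter_congr_decidable]

theorem card_isPrimitive_eq_sum_moebius_mul_totient (n : ℕ) [NeZero n] :
    (Nat.card {χ : DirichletCharacter ℂ n // χ.IsPrimitive} : ℤ) =
      ∑ x ∈ n.divisorsAntidiagonal, (moebius x.1 : ℤ) * (x.2.totient : ℤ) := by
  refine (sum_eq_iff_sum_mul_moebius_eq
    (f := fun d ↦ (Nat.card {ψ : DirichletCharacter ℂ d // ψ.IsPrimitive} : ℤ))
    (g := fun m ↦ (m.totient : ℤ)) |>.mp (fun m hm ↦ ?_) n (Nat.pos_of_neZero n)).symm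
  have : NeZero m := ⟨hm.ne'⟩
  exact_mod_cast (sum_card_isPrimitive_eq_card m).trans
    (card_eq_totient_of_hasEnoughRootsOfUnity ℂ m)

end DirichletCharacter

open DirichletCharacter in
theorem stmt_2 (q : ℕ) [NeZero q] :
    (Nat.card {χ : DirichletCharacter ℂ q // χ.IsPrimitive} : ℤ) =
      ∑ d ∈ q.divisors, moebius d * (Nat.totient (q / d) : ℤ) := by
  rw [card_isPrimitive_eq_sum_moebius_mul_totient,
    ← Nat.sum_divisorsAntidiagonal fun d r ↦ (moebius d : ℤ) * (r.totient : ℤ)]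
end

section
/- The limit as h tends to 0 of (Li(1+h) − log|h|) equals the Euler–Mascheroni constant γ, where Li denotes the principal value of the logarithmic integral. -/
/-!
Write `1 / log t = 1 / (t - 1) + g t` with `g t = 1 / log t + 1 / (1 - t)`; since
`(t - 1) / t ≤ log t ≤ t - 1`, we have `0 ≤ g ≤ 1` on `(0, ∞)`. The singular part
integrates to logarithms, and in the principal value the `log ε` terms cancel, so
`li (1 + h) = log |h| + ∫_0^{1+h} g` for `-1 ≤ h ≠ 0`, which tends to `∫_0^1 g`.
Finally, expanding `1 / (1 - t)` geometrically and using
`∫_0^1 (t^N - 1) / log t = ∫_0^N ∫_0^1 t^x dt dx = log (N + 1)` gives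
`∫_0^1 g = H_N - log (N + 1) + ∫_0^1 t^N g`, where the last term is at most `1 / (N + 1)`;
letting `N → ∞`, `∫_0^1 g = γ`.
-/

open Filter Topology

/-- The logarithmic integral `li x`, as the Cauchy principal value of `∫_0^x dt / log t`
(for `x ≤ 1` the integrand is integrable and no principal value is needed). -/
noncomputable def li (x : ℝ) : ℝ :=
  if x ≤ 1 then ∫ t in (0:ℝ)..x, 1 / Real.log t
  else limUnder (𝓝[>] (0:ℝ)) fun ε =>
    (∫ t in (0:ℝ)..(1 - ε), 1 / Real.log t) + ∫ t in (1 + ε)..x, 1 / Real.log t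

open Real Set MeasureTheory intervalIntegral
open scoped Interval

-- `1 / log t` minus its principal part `1 / (t - 1)` at the simple pole `t = 1`
noncomputable def regLogInv (t : ℝ) : ℝ := 1 / log t + 1 / (1 - t)

lemma regLogInv_eq (t : ℝ) : regLogInv t = 1 / log t - 1 / (t - 1) := by
  rw [regLogInv, ← neg_sub t 1, div_neg, ← sub_eq_add_neg]

-- `(t - 1) / t ≤ log t ≤ t - 1`, inverted on either side of `1`
lemma regLogInv_mem_Icc {t : ℝ} (ht : 0 ≤ t) : regLogInv t ∈ Icc 0 1 := by
  rcases ht.eq_or_lt with rfl | ht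
  · simp [regLogInv]
  have hupper := log_le_sub_one_of_pos ht
  have hlower : (t - 1) / t ≤ log t := by
    rw [sub_div, div_self ht.ne', ← inv_eq_one_div]; exact one_sub_inv_le_log_of_pos ht
  rw [regLogInv_eq]
  rcases lt_trichotomy t 1 with h1 | rfl | h1
  · have hlog : log t < 0 := log_neg ht h1
    have hsub : t - 1 < 0 := by linarith
    have h₁ : 1 / (t - 1) ≤ 1 / log t := one_div_le_one_div_of_neg_of_le hsub hupper
    have h₂ : 1 / log t ≤ t / (t - 1) := by
      simpa only [one_div_div] using one_div_le_one_div_of_neg_of_le hlog hlower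
    have h₃ : t / (t - 1) - 1 / (t - 1) = 1 := by rw [← sub_div, div_self hsub.ne]
    constructor <;> linarith
  · simp
  · have hlog : 0 < log t := log_pos h1
    have hsub : 0 < t - 1 := by linarith
    have h₁ : 1 / (t - 1) ≤ 1 / log t := one_div_le_one_div_of_le hlog hupper
    have h₂ : 1 / log t ≤ t / (t - 1) := by
      simpa only [one_div_div] using one_div_le_one_div_of_le (div_pos hsub ht) hlower
    have h₃ : t / (t - 1) - 1 / (t - 1) = 1 := by rw [← sub_div, div_self hsub.ne']
    constructor <;> linarith

lemma abs_regLogInv_le_one {t : ℝ} (ht : 0 ≤ t) : |regLogInv t| ≤ 1 := by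
  obtain ⟨h₀, h₁⟩ := regLogInv_mem_Icc ht
  rwa [abs_of_nonneg h₀]

lemma measurable_regLogInv : Measurable regLogInv := by
  unfold regLogInv; fun_prop

lemma intervalIntegrable_regLogInv {a b : ℝ} (ha : 0 ≤ a) (hb : 0 ≤ b) :
    IntervalIntegrable regLogInv volume a b := by
  refine IntervalIntegrable.mono_fun' (g := fun _ => 1) intervalIntegrable_const
    measurable_regLogInv.aestronglyMeasurable ?_
  filter_upwards [ae_restrict_mem measurableSet_uIoc] with t ht
  exact abs_regLogInv_le_one ((le_min ha hb).trans ht.1.le)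

lemma integral_one_div_sub_one {a b : ℝ} (h : (1:ℝ) ∉ [[a, b]]) :
    ∫ t in a..b, 1 / (t - 1) = log (b - 1) - log (a - 1) := by
  have hne : ∀ t ∈ [[a, b]], t - 1 ≠ 0 := fun t ht =>
    sub_ne_zero.2 (ne_of_mem_of_not_mem ht h)
  refine integral_eq_sub_of_hasDerivAt (f := fun t => log (t - 1)) (fun t ht => ?_)
    (intervalIntegrable_one_div hne (by fun_prop))
  simpa using ((hasDerivAt_id t).sub_const 1).log (hne t ht)

lemma integral_one_div_log {a b : ℝ} (ha : 0 ≤ a) (hb : 0 ≤ b) (h : (1:ℝ) ∉ [[a, b]]) :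
    ∫ t in a..b, 1 / log t = (∫ t in a..b, regLogInv t) + (log (b - 1) - log (a - 1)) := by
  have hne : ∀ t ∈ [[a, b]], t - 1 ≠ 0 := fun t ht =>
    sub_ne_zero.2 (ne_of_mem_of_not_mem ht h)
  have hsplit : (fun t => 1 / log t) = fun t => regLogInv t + 1 / (t - 1) := by
    ext t; rw [regLogInv_eq]; ring
  rw [hsplit, integral_add (intervalIntegrable_regLogInv ha hb)
    (intervalIntegrable_one_div hne (by fun_prop)), integral_one_div_sub_one h]

lemma continuousAt_integral_regLogInv {x : ℝ} (hx : 0 < x) :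
    ContinuousAt (fun y => ∫ t in (0:ℝ)..y, regLogInv t) x := by
  have hcont := continuousOn_primitive_interval'
    (intervalIntegrable_regLogInv le_rfl (by linarith : (0:ℝ) ≤ x + 1)) left_mem_uIcc
  rw [uIcc_of_le (by linarith)] at hcont
  exact hcont.continuousAt (Icc_mem_nhds hx (by linarith))

lemma tendsto_principalValue_one_div_log {x : ℝ} (hx : 1 < x) :
    Tendsto (fun ε => (∫ t in (0:ℝ)..(1 - ε), 1 / log t) + ∫ t in (1 + ε)..x, 1 / log t)
      (𝓝[>] 0) (𝓝 (log (x - 1) + ∫ t in (0:ℝ)..x, regLogInv t)) := by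
  set F := fun y => ∫ t in (0:ℝ)..y, regLogInv t
  have hF : ContinuousAt F 1 := continuousAt_integral_regLogInv one_pos
  have hleft : Tendsto (fun ε : ℝ => F (1 - ε)) (𝓝 0) (𝓝 (F 1)) :=
    hF.tendsto.comp (Continuous.tendsto' (by fun_prop) 0 1 (by simp))
  have hright : Tendsto (fun ε : ℝ => F (1 + ε)) (𝓝 0) (𝓝 (F 1)) :=
    hF.tendsto.comp (Continuous.tendsto' (by fun_prop) 0 1 (by simp))
  have hlim := (hleft.sub hright).add_const (F x + log (x - 1))
  rw [sub_self, zero_add, add_comm] at hlim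
  refine (hlim.mono_left nhdsWithin_le_nhds).congr' ?_
  filter_upwards [Ioo_mem_nhdsGT (lt_min one_pos (sub_pos.2 hx))] with ε ⟨hε₀, hε⟩
  have hε₁ : ε < 1 := hε.trans_le (min_le_left _ _)
  have hεx : ε < x - 1 := hε.trans_le (min_le_right _ _)
  have hnot₁ : (1:ℝ) ∉ [[0, 1 - ε]] := by
    rw [mem_uIcc]; rintro (⟨h₁, h₂⟩ | ⟨h₁, h₂⟩) <;> linarith
  have hnot₂ : (1:ℝ) ∉ [[1 + ε, x]] := by
    rw [mem_uIcc]; rintro (⟨h₁, h₂⟩ | ⟨h₁, h₂⟩) <;> linarith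
  rw [integral_one_div_log le_rfl (by linarith) hnot₁,
    integral_one_div_log (by linarith) (by linarith) hnot₂,
    ← integral_interval_sub_left (a := 0) (b := x)
      (intervalIntegrable_regLogInv le_rfl (by linarith))
      (intervalIntegrable_regLogInv le_rfl (by linarith))]
  rw [show 1 - ε - 1 = -ε by ring, show 1 + ε - 1 = ε by ring, zero_sub, log_neg_eq_log,
    log_neg_eq_log, log_one]
  simp only [F]
  ring

lemma li_one_add {h : ℝ} (hne : h ≠ 0) (hgt : -1 ≤ h) :
    li (1 + h) = log |h| + ∫ t in (0:ℝ)..(1 + h), regLogInv t := by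
  rcases hne.lt_or_gt with hneg | hpos
  · have hnot : (1:ℝ) ∉ [[0, 1 + h]] := by
      rw [mem_uIcc]; rintro (⟨h₁, h₂⟩ | ⟨h₁, h₂⟩) <;> linarith
    rw [li, if_pos (by linarith), integral_one_div_log le_rfl (by linarith) hnot,
      add_sub_cancel_left, zero_sub, log_neg_eq_log, log_one, log_abs]
    ring
  · rw [li, if_neg (by linarith), abs_of_pos hpos]
    simpa using (tendsto_principalValue_one_div_log (by linarith : 1 < 1 + h)).limUnder_eq

lemma integral_const_rpow {t : ℝ} (ht : 0 < t) (ht1 : t ≠ 1) (a : ℝ) :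
    ∫ x in (0:ℝ)..a, t ^ x = (t ^ a - 1) / log t := by
  have hlog : log t ≠ 0 := log_ne_zero_of_pos_of_ne_one ht ht1
  rw [integral_eq_sub_of_hasDerivAt (f := fun x => t ^ x / log t) (fun x _ => ?_)
    ((continuous_const_rpow ht.ne').intervalIntegrable _ _), rpow_zero, sub_div]
  simpa [mul_div_cancel_right₀ _ hlog] using
    ((hasStrictDerivAt_const_rpow ht x).hasDerivAt.div_const (log t))

lemma integral_rpow_sub_one_div_log {a : ℝ} (ha : 0 ≤ a) :
    ∫ t in (0:ℝ)..1, (t ^ a - 1) / log t = log (a + 1) := by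
  have hint : Integrable (Function.uncurry fun t x : ℝ => t ^ x)
      ((volume.restrict (Ioc 0 1)).prod (volume.restrict (Ioc 0 a))) := by
    refine Integrable.mono' (integrable_const 1)
      (measurable_fst.pow measurable_snd).aestronglyMeasurable ?_
    rw [Measure.prod_restrict]
    filter_upwards [ae_restrict_mem (measurableSet_Ioc.prod measurableSet_Ioc)]
      with p ⟨⟨ht₀, ht₁⟩, hx₀, _⟩
    rw [Function.uncurry_apply_pair, norm_of_nonneg (rpow_nonneg ht₀.le _)]
    exact rpow_le_one ht₀.le ht₁ hx₀.le
  calc ∫ t in (0:ℝ)..1, (t ^ a - 1) / log t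
      = ∫ t in Ioc (0:ℝ) 1, ∫ x in Ioc 0 a, t ^ x := by
        rw [integral_of_le zero_le_one]
        refine setIntegral_congr_ae measurableSet_Ioc ?_
        filter_upwards [compl_mem_ae_iff.mpr (volume_singleton (a := (1:ℝ)))]
          with t ht₁ ⟨ht₀, _⟩
        rw [← integral_of_le ha, integral_const_rpow ht₀ ht₁]
    _ = ∫ x in Ioc 0 a, ∫ t in Ioc (0:ℝ) 1, t ^ x := integral_integral_swap hint
    _ = ∫ x in Ioc 0 a, 1 / (x + 1) := by
        refine setIntegral_congr_fun measurableSet_Ioc fun x hx => ?_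
        rw [← integral_of_le zero_le_one, integral_rpow (Or.inl (by linarith [hx.1])),
          one_rpow, zero_rpow (by linarith [hx.1]), sub_zero]
    _ = log (a + 1) := by
        rw [← integral_of_le ha, integral_comp_add_right (fun x => 1 / x), zero_add,
          integral_one_div, div_one]
        rw [mem_uIcc]; rintro (⟨h₁, -⟩ | ⟨h₁, -⟩) <;> linarith

-- `(1 - t ^ N) / (1 - t)` is the geometric sum
lemma pow_sub_one_div_log_eq {t : ℝ} (ht₀ : 0 < t) (ht₁ : t < 1) (N : ℕ) :
    (t ^ N - 1) / log t
      = ∑ n ∈ Finset.range N, t ^ n - regLogInv t + t ^ N * regLogInv t := by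
  have hlog : log t ≠ 0 := (log_neg ht₀ ht₁).ne
  have hsub : 1 - t ≠ 0 := by linarith
  have hsub' : t - 1 ≠ 0 := by linarith
  rw [geom_sum_eq ht₁.ne, regLogInv]
  field_simp
  ring

lemma integral_regLogInv_eq_harmonic_sub_log (N : ℕ) :
    ∫ t in (0:ℝ)..1, regLogInv t
      = harmonic N - log (N + 1) + ∫ t in (0:ℝ)..1, t ^ N * regLogInv t := by
  have hg := intervalIntegrable_regLogInv le_rfl zero_le_one
  have hpow : IntervalIntegrable (fun t : ℝ => t ^ N * regLogInv t) volume 0 1 :=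
    hg.continuousOn_mul (by fun_prop)
  have hgeom : IntervalIntegrable (fun t : ℝ => ∑ n ∈ Finset.range N, t ^ n) volume 0 1 :=
    (by fun_prop : Continuous _).intervalIntegrable _ _
  have hfrullani := integral_rpow_sub_one_div_log (Nat.cast_nonneg N : (0:ℝ) ≤ N)
  simp only [rpow_natCast] at hfrullani
  have hsplit : ∫ t in (0:ℝ)..1, (t ^ N - 1) / log t
      = ∫ t in (0:ℝ)..1,
          (∑ n ∈ Finset.range N, t ^ n - regLogInv t + t ^ N * regLogInv t) := by
    refine integral_congr_ae ?_
    filter_upwards [compl_mem_ae_iff.mpr (volume_singleton (a := (1:ℝ)))] with t ht₁ ht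
    rw [uIoc_of_le zero_le_one] at ht
    exact pow_sub_one_div_log_eq ht.1 (lt_of_le_of_ne ht.2 ht₁) N
  have hharmonic : ∫ t in (0:ℝ)..1, ∑ n ∈ Finset.range N, t ^ n = harmonic N := by
    rw [integral_finsetSum fun n _ => (continuous_pow n).intervalIntegrable _ _, harmonic]
    push_cast
    refine Finset.sum_congr rfl fun n _ => ?_
    rw [integral_pow]
    simp
  rw [hsplit, integral_add (hgeom.sub hg) hpow, integral_sub hgeom hg, hharmonic] at hfrullani
  linarith

lemma norm_integral_pow_mul_regLogInv_le (N : ℕ) :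
    ‖∫ t in (0:ℝ)..1, t ^ N * regLogInv t‖ ≤ 1 / (N + 1) := by
  calc ‖∫ t in (0:ℝ)..1, t ^ N * regLogInv t‖ ≤ ∫ t in (0:ℝ)..1, t ^ N := by
        refine norm_integral_le_of_norm_le zero_le_one (.of_forall fun t ht => ?_)
          ((continuous_pow N).intervalIntegrable _ _)
        rw [norm_mul, norm_of_nonneg (pow_nonneg ht.1.le N), Real.norm_eq_abs]
        exact mul_le_of_le_one_right (pow_nonneg ht.1.le N) (abs_regLogInv_le_one ht.1.le)
    _ = 1 / (N + 1) := by simp [integral_pow]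

lemma integral_regLogInv_eq_eulerMascheroniConstant :
    ∫ t in (0:ℝ)..1, regLogInv t = eulerMascheroniConstant := by
  have htail : Tendsto (fun N : ℕ => ∫ t in (0:ℝ)..1, t ^ N * regLogInv t) atTop (𝓝 0) :=
    squeeze_zero_norm (fun N => norm_integral_pow_mul_regLogInv_le N)
      tendsto_one_div_add_atTop_nhds_zero_nat
  have hlim := tendsto_harmonic_sub_log_add_one.add htail
  rw [add_zero] at hlim
  simp only [← integral_regLogInv_eq_harmonic_sub_log] at hlim
  exact tendsto_nhds_unique tendsto_const_nhds hlim

theorem stmt_3 :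
    Tendsto (fun h : ℝ => li (1 + h) - Real.log |h|) (𝓝[≠] (0:ℝ))
      (𝓝 Real.eulerMascheroniConstant) := by
  have hcont : Tendsto (fun h : ℝ => ∫ t in (0:ℝ)..(1 + h), regLogInv t) (𝓝 0)
      (𝓝 eulerMascheroniConstant) := by
    rw [← integral_regLogInv_eq_eulerMascheroniConstant]
    exact (continuousAt_integral_regLogInv one_pos).tendsto.comp
      (Continuous.tendsto' (by fun_prop) 0 1 (by simp))
  refine (hcont.mono_left nhdsWithin_le_nhds).congr' ?_
  filter_upwards [self_mem_nhdsWithin,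
    nhdsWithin_le_nhds (Ioi_mem_nhds (by norm_num : (-1:ℝ) < 0))] with h hne hgt
  rw [li_one_add hne (le_of_lt hgt)]
  ring
end
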